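/- Let (P,s,v) be a β-signed differential poset and for k, n ≥ 0 set τ_{k,n} = ∑_{x ∈ P_n} v(x)·⟨D^k 𝐏_{n+k}, x⟩, where 𝐏_m = ∑_{y ∈ P_m} y (and τ_{k,n} = 0 for n < 0). Then for all integers l ≥ 0 and n ≥ 0: ∑_{j=0}^{l} binom(l,j)·τ_{2l, n−2j} = 2^l · ∑_{x ∈ P_n} v(x). Equivalently, with G(P,t) = ∑_{x∈P} v(x) t^{ρ(x)} and G_{2l}(P,t) = ∑_{n≥0} τ_{2l,n} t^n as formal power series, (1+t²)^l · G_{2l}(P,t) = 2^l · G(P,t). -/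

import Mathlib

open scoped Classical

namespace SDP

variable {P : Type*} [PartialOrder P] [OrderBot P]

/-- The sign of a saturated chain, recorded as a list: the product of the
edge signs `s` over consecutive pairs. -/
def chainSign {α : Type*} (s : α → α → ℤ) : List α → ℤ
  | [] => 1
  | [_] => 1
  | x :: y :: rest => s x y * chainSign s (y :: rest)

/-- Maximal chains from `⊥` to `x`: lists whose consecutive entries are covers,
starting at `⊥` and ending at `x`. -/
def chainsTo (x : P) : Set (List P) :=
  {l : List P | l.Chain' (· ⋖ ·) ∧ l.head? = some (⊥ : P) ∧ l.getLast? = some x}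

/-- `e(x)`: the signed sum of maximal chains from `⊥` to `x`. -/
noncomputable def e (s : P → P → ℤ) (x : P) : ℤ :=
  ∑ᶠ l ∈ chainsTo x, chainSign s l

variable (K : Type*) [Field K]

/-- The up operator on `K̂P`, written coefficientwise:
`(U f)(y) = ∑_{x ⋖ y} s(x ⋖ y) f(x)`. -/
noncomputable def Uop (s : P → P → ℤ) (f : P → K) : P → K :=
  fun y => ∑ᶠ x ∈ {x : P | x ⋖ y}, (s x y : K) * f x

/-- The down operator on `K̂P`, written coefficientwise:
`(D f)(x) = ∑_{y ⋗ x} s(x ⋖ y) v(y) v(x) f(y)`. -/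
noncomputable def Dop (s : P → P → ℤ) (v : P → ℤ) (f : P → K) : P → K :=
  fun x => ∑ᶠ y ∈ {y : P | x ⋖ y}, (s x y : K) * (v y : K) * (v x : K) * f y

variable [GradeMinOrder ℕ P]

/-- `(P, s, v)` is a signed poset: edge labels and vertex labels are signs, and
each rank of the graded poset `P` is finite. -/
def IsSignedPoset (s : P → P → ℤ) (v : P → ℤ) : Prop :=
  (∀ x y : P, x ⋖ y → s x y = 1 ∨ s x y = -1) ∧
  (∀ x : P, v x = 1 ∨ v x = -1) ∧
  (∀ n : ℕ, {x : P | grade ℕ x = n}.Finite)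

/-- Weakly signed differential: `v(0̂) = 1` and `UD + DU = I` on `K̂P`. -/
def WeaklySignedDifferential (s : P → P → ℤ) (v : P → ℤ) : Prop :=
  v ⊥ = 1 ∧ ∀ f : P → K, Uop K s (Dop K s v f) + Dop K s v (Uop K s f) = f

/-- α-signed differential: weakly signed differential and `(U + D)𝐏 = 𝐏`. -/
def AlphaSignedDifferential (s : P → P → ℤ) (v : P → ℤ) : Prop :=
  WeaklySignedDifferential K s v ∧
    Uop K s (fun _ => 1) + Dop K s v (fun _ => 1) = (fun _ => (1 : K))

/-- β-signed differential: weakly signed differential and `(D - U)𝐏 = 𝐏`. -/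
def BetaSignedDifferential (s : P → P → ℤ) (v : P → ℤ) : Prop :=
  WeaklySignedDifferential K s v ∧
    Dop K s v (fun _ => 1) - Uop K s (fun _ => 1) = (fun _ => (1 : K))

end SDP

namespace SDP

variable {P : Type*} [PartialOrder P] [OrderBot P] (K : Type*) [Field K]
variable [GradeMinOrder ℕ P]

/-- `𝐏ₘ = ∑_{y ∈ Pₘ} y`, the indicator vector of the `m`-th rank (empty for `m < 0`). -/
noncomputable def rankIndicator (m : ℤ) : P → K :=
  fun p => if (grade ℕ p : ℤ) = m then 1 else 0

/-- `τ_{k,n} = ∑_{x ∈ Pₙ} v(x) ⟨Dᵏ 𝐏_{n+k}, x⟩` (zero for `n < 0`). -/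
noncomputable def tau (s : P → P → ℤ) (v : P → ℤ) (k : ℕ) (n : ℤ) : K :=
  ∑ᶠ x ∈ {x : P | (grade ℕ x : ℤ) = n},
    (v x : K) * ((Dop K s v)^[k] (rankIndicator K (n + k))) x

end SDP

/-!
The β-condition `D𝐏 - U𝐏 = 𝐏`, read rank by rank, says `D𝐏ₘ = 𝐏ₘ₋₁ + U𝐏ₘ₋₂`. Together with
`DU = I - UD` this gives `D²𝐏ₘ = 2𝐏ₘ₋₂ - U²𝐏ₘ₋₄`, and `UD + DU = I` also makes `D` commute
with `U²`. For the form `⟨f, g⟩ₘ = ∑_{x ∈ Pₘ} v(x) f(x) g(x)`, the operator `U` from rank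
`m - 1` to rank `m` is adjoint to `D` (because `v² = 1`), and `τ_{k,n} = ⟨Dᵏ𝐏_{n+k}, 𝐏ₙ⟩ₙ`.
Moving the factor `U²` across the form twice gives
`τ_{k+2,n} - τ_{k+2,n-4} = 2τ_{k,n} - 2τ_{k,n-2}`. Since everything vanishes in negative rank,
it follows that `τ_{k+2,n} + τ_{k+2,n-2} = 2τ_{k,n}`, i.e. `(1 + t²) G_{k+2} = 2 G_k`.
Iterating this Pascal-type recursion gives the binomial identity, and `τ_{0,n} = ∑_{x ∈ Pₙ} v(x)`.
-/

theorem sum_range_choose_mul_eq_two_pow_mul {R : Type*} [CommRing R] (T : ℕ → ℤ → R)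
    (hT : ∀ l n, T (l + 1) n + T (l + 1) (n - 2) = 2 * T l n) (l : ℕ) (n : ℤ) :
    ∑ j ∈ Finset.range (l + 1), (l.choose j : R) * T l (n - 2 * j) = 2 ^ l * T 0 n := by
  induction l generalizing n with
  | zero => simp
  | succ l ih =>
    rw [Finset.sum_choose_succ_mul (fun j _ => T (l + 1) (n - 2 * j)), ← Finset.sum_add_distrib]
    calc ∑ j ∈ Finset.range (l + 1), ((l.choose j : R) * T (l + 1) (n - 2 * j)
          + (l.choose j : R) * T (l + 1) (n - 2 * (j + 1 : ℕ)))
        = 2 * ∑ j ∈ Finset.range (l + 1), (l.choose j : R) * T l (n - 2 * j) := by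
          rw [Finset.mul_sum]
          refine Finset.sum_congr rfl fun j _ => ?_
          rw [← mul_add, show n - 2 * ((j + 1 : ℕ) : ℤ) = n - 2 * j - 2 by push_cast; ring, hT]
          ring
      _ = 2 ^ (l + 1) * T 0 n := by rw [ih, pow_succ]; ring

theorem commute_sq_of_mul_add_mul_eq_one {R : Type*} [Ring R] {a b : R}
    (h : a * b + b * a = 1) : Commute a (b ^ 2) := by
  have hab : a * b = 1 - b * a := eq_sub_of_add_eq h
  calc a * b ^ 2 = a * b * b := by rw [sq, mul_assoc]
    _ = (1 - b * a) * b := by rw [hab]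
    _ = b - b * (a * b) := by noncomm_ring
    _ = b - b * (1 - b * a) := by rw [hab]
    _ = b ^ 2 * a := by noncomm_ring

namespace SDP

open Finset

variable {P : Type*} [PartialOrder P] [GradeMinOrder ℕ P]

theorem grade_eq_add_one_of_covBy {x y : P} (h : x ⋖ y) : grade ℕ y = grade ℕ x + 1 :=
  (Nat.covBy_iff_add_one_eq.mp (h.grade ℕ)).symm

theorem finite_setOf_intCast_grade_eq (hfin : ∀ n : ℕ, {x : P | grade ℕ x = n}.Finite)
    (m : ℤ) : {x : P | (grade ℕ x : ℤ) = m}.Finite :=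
  (hfin m.toNat).subset fun x (hx : (grade ℕ x : ℤ) = m) => show grade ℕ x = m.toNat by omega

theorem rankIndicator_of_covBy (K : Type*) [Field K] {x y : P} (h : x ⋖ y) (m : ℤ) :
    rankIndicator K m y = rankIndicator K (m - 1) x := by
  have := grade_eq_add_one_of_covBy h
  unfold rankIndicator
  split_ifs <;> first | rfl | omega

variable (hfin : ∀ n : ℕ, {x : P | grade ℕ x = n}.Finite)

noncomputable def rankFinset (m : ℤ) : Finset P :=
  (finite_setOf_intCast_grade_eq hfin m).toFinset

noncomputable def upperCovers (x : P) : Finset P :=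
  Set.Finite.toFinset (s := {y | x ⋖ y})
    ((hfin (grade ℕ x + 1)).subset fun _ h => grade_eq_add_one_of_covBy h)

noncomputable def lowerCovers (x : P) : Finset P :=
  Set.Finite.toFinset (s := {z | z ⋖ x})
    ((finite_setOf_intCast_grade_eq hfin (grade ℕ x - 1)).subset fun z h =>
      show (grade ℕ z : ℤ) = grade ℕ x - 1 by have := grade_eq_add_one_of_covBy h; omega)

variable {hfin} in
theorem mem_rankFinset {m : ℤ} {x : P} : x ∈ rankFinset hfin m ↔ (grade ℕ x : ℤ) = m :=
  Set.Finite.mem_toFinset _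

variable {hfin} in
theorem mem_upperCovers {x y : P} : y ∈ upperCovers hfin x ↔ x ⋖ y :=
  Set.Finite.mem_toFinset _

variable {hfin} in
theorem mem_lowerCovers {x z : P} : z ∈ lowerCovers hfin x ↔ z ⋖ x :=
  Set.Finite.mem_toFinset _

variable {K : Type*} [Field K] {s : P → P → ℤ} {v : P → ℤ}

theorem tau_of_neg (k : ℕ) {n : ℤ} (hn : n < 0) : tau K s v k n = 0 := by
  rw [tau]
  convert finsum_mem_empty
  ext x
  exact iff_of_false (fun hx : (grade ℕ x : ℤ) = n => by omega) id

theorem tau_zero (n : ℕ) : tau K s v 0 n = ∑ᶠ x ∈ {x : P | grade ℕ x = n}, (v x : K) := by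
  simp only [tau, Function.iterate_zero, id, Nat.cast_zero, add_zero, Nat.cast_inj]
  exact finsum_mem_congr rfl fun x hx => by
    rw [rankIndicator, if_pos (congrArg Nat.cast (hx : grade ℕ x = n)), mul_one]

noncomputable def pairing (v : P → ℤ) (m : ℤ) (f g : P → K) : K :=
  ∑ x ∈ rankFinset hfin m, (v x : K) * f x * g x

theorem Dop_eq_sum (f : P → K) (x : P) :
    Dop K s v f x = ∑ y ∈ upperCovers hfin x, (s x y : K) * v y * v x * f y :=
  finsum_mem_eq_finite_toFinset_sum _ _

theorem Uop_eq_sum (f : P → K) (x : P) :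
    Uop K s f x = ∑ z ∈ lowerCovers hfin x, (s z x : K) * f z :=
  finsum_mem_eq_finite_toFinset_sum _ _

variable (K s v) in
noncomputable def downMap : Module.End K (P → K) where
  toFun := Dop K s v
  map_add' f g := funext fun x => by
    simp only [Dop_eq_sum hfin, Pi.add_apply, mul_add, sum_add_distrib]
  map_smul' c f := funext fun x => by
    simp only [Dop_eq_sum hfin, Pi.smul_apply, smul_eq_mul, RingHom.id_apply, mul_sum,
      mul_left_comm c]

variable (K s) in
noncomputable def upMap : Module.End K (P → K) where
  toFun := Uop K s
  map_add' f g := funext fun x => by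
    simp only [Uop_eq_sum hfin, Pi.add_apply, mul_add, sum_add_distrib]
  map_smul' c f := funext fun x => by
    simp only [Uop_eq_sum hfin, Pi.smul_apply, smul_eq_mul, RingHom.id_apply, mul_sum,
      mul_left_comm c]

@[simp] theorem downMap_apply (f : P → K) : downMap hfin K s v f = Dop K s v f := rfl

@[simp] theorem upMap_apply (f : P → K) : upMap hfin K s f = Uop K s f := rfl

include hfin in
theorem Dop_add (f g : P → K) : Dop K s v (f + g) = Dop K s v f + Dop K s v g :=
  map_add (downMap hfin K s v) f g

include hfin in
theorem Uop_add (f g : P → K) : Uop K s (f + g) = Uop K s f + Uop K s g :=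
  map_add (upMap hfin K s) f g

include hfin in
theorem Dop_rankIndicator_mul (m : ℤ) (f : P → K) :
    Dop K s v (rankIndicator K m * f) = rankIndicator K (m - 1) * Dop K s v f := by
  funext x
  simp only [Pi.mul_apply, Dop_eq_sum hfin, mul_sum]
  refine sum_congr rfl fun y hy => ?_
  rw [rankIndicator_of_covBy K (mem_upperCovers.mp hy)]
  ring

include hfin in
theorem Uop_rankIndicator_mul (m : ℤ) (f : P → K) :
    Uop K s (rankIndicator K m * f) = rankIndicator K (m + 1) * Uop K s f := by
  funext x
  simp only [Pi.mul_apply, Uop_eq_sum hfin, mul_sum]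
  refine sum_congr rfl fun z hz => ?_
  rw [rankIndicator_of_covBy K (mem_lowerCovers.mp hz), add_sub_cancel_right]
  ring

include hfin in
theorem Dop_rankIndicator (hβ : Dop K s v 1 - Uop K s 1 = 1) (m : ℤ) :
    Dop K s v (rankIndicator K m)
      = rankIndicator K (m - 1) + Uop K s (rankIndicator K (m - 2)) := by
  have hD := Dop_rankIndicator_mul hfin (s := s) (v := v) m (1 : P → K)
  have hU := Uop_rankIndicator_mul hfin (s := s) (m - 2) (1 : P → K)
  rw [mul_one] at hD hU
  rw [hD, hU, show m - 2 + 1 = m - 1 by ring, eq_add_of_sub_eq hβ, mul_add, mul_one]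

theorem downMap_mul_upMap_add_upMap_mul_downMap
    (hUD : ∀ f : P → K, Uop K s (Dop K s v f) + Dop K s v (Uop K s f) = f) :
    downMap hfin K s v * upMap hfin K s + upMap hfin K s * downMap hfin K s v = 1 :=
  LinearMap.ext fun f => (add_comm _ _).trans (hUD f)

theorem downMap_sq_rankIndicator
    (hUD : ∀ f : P → K, Uop K s (Dop K s v f) + Dop K s v (Uop K s f) = f)
    (hβ : Dop K s v 1 - Uop K s 1 = 1) (m : ℤ) :
    (downMap hfin K s v ^ 2) (rankIndicator K m)
      = (2 : K) • rankIndicator K (m - 2) - (upMap hfin K s ^ 2) (rankIndicator K (m - 4)) := by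
  have hDU : ∀ f, Dop K s v (Uop K s f) = f - Uop K s (Dop K s v f) :=
    fun f => eq_sub_of_add_eq' (hUD f)
  simp only [sq, Module.End.mul_apply, downMap_apply, upMap_apply]
  rw [Dop_rankIndicator hfin hβ, Dop_add hfin, hDU, Dop_rankIndicator hfin hβ,
    Dop_rankIndicator hfin hβ, Uop_add hfin]
  simp only [sub_sub]
  norm_num
  module

theorem downMap_pow_add_two_rankIndicator
    (hUD : ∀ f : P → K, Uop K s (Dop K s v f) + Dop K s v (Uop K s f) = f)
    (hβ : Dop K s v 1 - Uop K s 1 = 1) (k : ℕ) (m : ℤ) :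
    (downMap hfin K s v ^ (k + 2)) (rankIndicator K m)
      = (2 : K) • (downMap hfin K s v ^ k) (rankIndicator K (m - 2))
        - (upMap hfin K s ^ 2) ((downMap hfin K s v ^ k) (rankIndicator K (m - 4))) := by
  have hcomm := (commute_sq_of_mul_add_mul_eq_one
    (downMap_mul_upMap_add_upMap_mul_downMap hfin hUD)).pow_left k
  rw [pow_add, Module.End.mul_apply, downMap_sq_rankIndicator hfin hUD hβ, map_sub, map_smul,
    ← Module.End.mul_apply, hcomm.eq, Module.End.mul_apply]

theorem tau_eq_pairing (k : ℕ) (n : ℤ) :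
    tau K s v k n = pairing hfin v n ((downMap hfin K s v ^ k) (rankIndicator K (n + k))) 1 := by
  rw [tau, finsum_mem_eq_finite_toFinset_sum _ (finite_setOf_intCast_grade_eq hfin n)]
  exact sum_congr rfl fun x _ => by rw [Pi.one_apply, mul_one, Module.End.pow_apply]; rfl

variable {hfin}

theorem pairing_comm (m : ℤ) (f g : P → K) : pairing hfin v m f g = pairing hfin v m g f :=
  sum_congr rfl fun _ _ => by ring

theorem pairing_sub_left (m : ℤ) (f₁ f₂ g : P → K) :
    pairing hfin v m (f₁ - f₂) g = pairing hfin v m f₁ g - pairing hfin v m f₂ g := by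
  simp only [pairing, Pi.sub_apply, mul_sub, sub_mul, sum_sub_distrib]

theorem pairing_smul_left (m : ℤ) (c : K) (f g : P → K) :
    pairing hfin v m (c • f) g = c * pairing hfin v m f g := by
  simp only [pairing, Pi.smul_apply, smul_eq_mul, mul_sum]
  exact sum_congr rfl fun _ _ => by ring

theorem pairing_rankIndicator_mul_right (m : ℤ) (f g : P → K) :
    pairing hfin v m f (rankIndicator K m * g) = pairing hfin v m f g :=
  sum_congr rfl fun x hx => by
    rw [Pi.mul_apply, rankIndicator, if_pos (mem_rankFinset.mp hx), one_mul]

theorem pairing_Uop_left (hv : ∀ x, v x = 1 ∨ v x = -1) (m : ℤ) (f g : P → K) :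
    pairing hfin v m (Uop K s f) g = pairing hfin v (m - 1) f (Dop K s v g) := by
  simp only [pairing, Uop_eq_sum hfin, Dop_eq_sum hfin, mul_sum, sum_mul]
  refine (sum_comm' fun x z => ?_).trans
    (sum_congr rfl fun z _ => sum_congr rfl fun x _ => ?_)
  · rw [mem_rankFinset, mem_lowerCovers, mem_upperCovers, mem_rankFinset]
    constructor
    · rintro ⟨hx, hzx⟩
      exact ⟨hzx, by have := grade_eq_add_one_of_covBy hzx; omega⟩
    · rintro ⟨hzx, hz⟩
      exact ⟨by have := grade_eq_add_one_of_covBy hzx; omega, hzx⟩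
  · have hv2 : (v z : K) * v z = 1 := by rcases hv z with h | h <;> simp [h]
    linear_combination (-(s z x : K) * v x * f z * g x) * hv2

theorem pairing_Uop_sq_left (hv : ∀ x, v x = 1 ∨ v x = -1) (m : ℤ) (f g : P → K) :
    pairing hfin v m (Uop K s (Uop K s f)) g
      = pairing hfin v (m - 2) f (Dop K s v (Dop K s v g)) := by
  rw [pairing_Uop_left hv, pairing_Uop_left hv, sub_sub]
  norm_num

variable (hfin)

include hfin in
theorem tau_add_two (hv : ∀ x, v x = 1 ∨ v x = -1)
    (hUD : ∀ f : P → K, Uop K s (Dop K s v f) + Dop K s v (Uop K s f) = f)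
    (hβ : Dop K s v 1 - Uop K s 1 = 1) (k : ℕ) (n : ℤ) :
    tau K s v (k + 2) n
      = 2 * tau K s v k n - 2 * tau K s v k (n - 2) + tau K s v (k + 2) (n - 4) := by
  set D := downMap hfin K s v
  set U := upMap hfin K s
  set g := (D ^ k) (rankIndicator K (n - 2 + k))
  have hUg :
      pairing hfin v n ((U ^ 2) g) 1 = 2 * tau K s v k (n - 2) - tau K s v (k + 2) (n - 4) :=
    calc pairing hfin v n ((U ^ 2) g) 1
        = pairing hfin v (n - 2) g ((D ^ 2) (rankIndicator K n)) := by
          rw [← pairing_rankIndicator_mul_right, mul_one]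
          exact pairing_Uop_sq_left hv n g _
      _ = 2 * pairing hfin v (n - 2) (rankIndicator K (n - 2)) g
          - pairing hfin v (n - 2) ((U ^ 2) (rankIndicator K (n - 4))) g := by
          rw [downMap_sq_rankIndicator hfin hUD hβ, pairing_comm, pairing_sub_left,
            pairing_smul_left]
      _ = 2 * pairing hfin v (n - 2) g (rankIndicator K (n - 2) * 1)
          - pairing hfin v (n - 4) ((D ^ 2) g) (rankIndicator K (n - 4) * 1) := by
          rw [pairing_comm _ _ g, mul_one, mul_one, pairing_comm (n - 4),
            show n - 4 = n - 2 - 2 by ring]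
          exact congrArg _ (pairing_Uop_sq_left hv _ _ g)
      _ = 2 * tau K s v k (n - 2) - tau K s v (k + 2) (n - 4) := by
          rw [pairing_rankIndicator_mul_right, pairing_rankIndicator_mul_right,
            tau_eq_pairing hfin, tau_eq_pairing hfin, ← Module.End.mul_apply, ← pow_add,
            add_comm 2 k]
          congr 4
          push_cast
          ring
  rw [tau_eq_pairing hfin, downMap_pow_add_two_rankIndicator hfin hUD hβ, pairing_sub_left,
    pairing_smul_left, show n + ((k + 2 : ℕ) : ℤ) - 4 = n - 2 + k by push_cast; ring, hUg,
    show n + ((k + 2 : ℕ) : ℤ) - 2 = n + k by push_cast; ring, ← tau_eq_pairing hfin]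
  ring

include hfin in
theorem tau_add_two_add_tau_add_two_sub_two (hv : ∀ x, v x = 1 ∨ v x = -1)
    (hUD : ∀ f : P → K, Uop K s (Dop K s v f) + Dop K s v (Uop K s f) = f)
    (hβ : Dop K s v 1 - Uop K s 1 = 1) (k : ℕ) (n : ℤ) :
    tau K s v (k + 2) n + tau K s v (k + 2) (n - 2) = 2 * tau K s v k n := by
  have hperiodic : Function.Periodic
      (fun n => tau K s v (k + 2) n + tau K s v (k + 2) (n - 2) - 2 * tau K s v k n) 2 :=
    fun n => by
      have h := tau_add_two hfin hv hUD hβ k (n + 2)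
      simp only [add_sub_cancel_right, show n + 2 - 4 = n - 2 by ring] at h ⊢
      linear_combination h
  have hneg : ∀ n : ℤ, n < 0 →
      tau K s v (k + 2) n + tau K s v (k + 2) (n - 2) - 2 * tau K s v k n = 0 := fun n hn => by
    rw [tau_of_neg _ hn, tau_of_neg _ (by omega), tau_of_neg _ hn]
    ring
  rw [← sub_eq_zero, ← hperiodic.sub_nat_mul_eq (n.toNat + 1)]
  exact hneg _ (by omega)

end SDP

theorem statement9_general {P : Type*} [PartialOrder P] [OrderBot P] [GradeMinOrder ℕ P]
    (K : Type*) [Field K]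
    (s : P → P → ℤ) (v : P → ℤ)
    (hsp : SDP.IsSignedPoset s v)
    (hbeta : SDP.BetaSignedDifferential K s v)
    (l n : ℕ) :
    (∑ j ∈ Finset.range (l + 1), (l.choose j : K) * SDP.tau K s v (2 * l) ((n : ℤ) - 2 * j))
      = 2 ^ l * ∑ᶠ x ∈ {x : P | grade ℕ x = n}, (v x : K) := by
  obtain ⟨-, hv, hfin⟩ := hsp
  obtain ⟨⟨-, hUD⟩, hβ⟩ := hbeta
  rw [← SDP.tau_zero]
  exact sum_range_choose_mul_eq_two_pow_mul (fun l n => SDP.tau K s v (2 * l) n)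
    (fun l n => SDP.tau_add_two_add_tau_add_two_sub_two hfin hv hUD hβ (2 * l) n) l n

/-- in a β-signed differential poset, for all `l, n ≥ 0`:
`∑_{j=0}^{l} binom(l,j) τ_{2l, n−2j} = 2^l ∑_{x ∈ Pₙ} v(x)`. -/
theorem statement9 {P : Type*} [PartialOrder P] [OrderBot P] [GradeMinOrder ℕ P]
    (K : Type*) [Field K] [CharZero K]
    (s : P → P → ℤ) (v : P → ℤ)
    (hsp : SDP.IsSignedPoset s v)
    (hbeta : SDP.BetaSignedDifferential K s v)
    (l n : ℕ) :
    (∑ j ∈ Finset.range (l + 1), (l.choose j : K) * SDP.tau K s v (2 * l) ((n : ℤ) - 2 * j))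
      = 2 ^ l * ∑ᶠ x ∈ {x : P | grade ℕ x = n}, (v x : K) :=
  statement9_general K s v hsp hbeta l n
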